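/- With $w(y) = -|y|$, $r \geq 0$, and $u_r(x) = \sup_{|x-y|\leq r} w(y)$ as above, for any $\gamma \in [0,1]$ the function $\chi(x) = \gamma \cdot \mathbf{1}_{[-r,r]}(x)$ satisfies $\mathbf{1}_{\{u_r > 0\}}(x) \leq \chi(x) \leq \mathbf{1}_{\{u_r \geq 0\}}(x)$ for all $x \in \mathbb{R}$. -/

import Mathlib

/-! Since `w ≤ 0` with `w 0 = 0`, the envelope `uᵣ` is nonpositive everywhere and vanishes wherever
the closed ball of radius `r` reaches the maximiser `0`, i.e. on `[-r, r]`. So `{uᵣ > 0}` is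
empty and `[-r, r] ⊆ {uᵣ ≥ 0}`, which squeezes any `γ ∈ [0, 1]` multiple of `𝟙_[-r,r]`. -/

open Set

lemma sSup_image_nonpos {α : Type*} {w : α → ℝ} (hw : ∀ y, w y ≤ 0) (s : Set α) :
    sSup (w '' s) ≤ 0 :=
  Real.sSup_nonpos (by rintro _ ⟨y, -, rfl⟩; exact hw y)

lemma sSup_image_eq_zero_of_nonpos {α : Type*} {w : α → ℝ} (hw : ∀ y, w y ≤ 0) {s : Set α}
    {y₀ : α} (hy₀ : y₀ ∈ s) (hwy₀ : w y₀ = 0) : sSup (w '' s) = 0 := by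
  have hbdd : BddAbove (w '' s) := ⟨0, by rintro _ ⟨y, -, rfl⟩; exact hw y⟩
  exact le_antisymm (sSup_image_nonpos hw s) (hwy₀ ▸ le_csSup hbdd (mem_image_of_mem w hy₀))

lemma indicator_pos_le_mul_indicator_le_indicator_nonneg {α : Type*} {u : α → ℝ} {S : Set α}
    (hu : ∀ x, u x ≤ 0) (hS : ∀ x ∈ S, u x = 0) {γ : ℝ} (hγ : γ ∈ Icc (0 : ℝ) 1) (x : α) :
    ({x | u x > 0}).indicator (fun _ => (1 : ℝ)) x ≤ γ * S.indicator (fun _ => (1 : ℝ)) x ∧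
      γ * S.indicator (fun _ => (1 : ℝ)) x ≤ ({x | u x ≥ 0}).indicator (fun _ => (1 : ℝ)) x := by
  have hpos : x ∉ {x | u x > 0} := not_lt.2 (hu x)
  by_cases hx : x ∈ S
  · have hnonneg : x ∈ {x | u x ≥ 0} := (hS x hx).ge
    simp only [indicator_of_notMem hpos, indicator_of_mem hx, indicator_of_mem hnonneg, mul_one]
    exact hγ
  · simp only [indicator_of_notMem hpos, indicator_of_notMem hx, mul_zero]
    exact ⟨le_rfl, indicator_nonneg (fun _ _ => zero_le_one) x⟩

theorem occupation_function_sandwich_general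
    (w : ℝ → ℝ) (hw : ∀ y, w y = -|y|) (r : ℝ)
    (uᵣ : ℝ → ℝ) (huᵣ : ∀ x, uᵣ x = sSup (w '' {y | |x - y| ≤ r}))
    (γ : ℝ) (hγ : γ ∈ Icc (0:ℝ) 1)
    (χ : ℝ → ℝ) (hχ : ∀ x, χ x = γ * (Icc (-r) r).indicator (fun _ => (1:ℝ)) x) :
    ∀ x : ℝ,
      ({x : ℝ | uᵣ x > 0}).indicator (fun _ => (1:ℝ)) x ≤ χ x ∧
      χ x ≤ ({x : ℝ | uᵣ x ≥ 0}).indicator (fun _ => (1:ℝ)) x := by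
  have hw_nonpos : ∀ y, w y ≤ 0 := fun y => by simp [hw]
  have hu_nonpos : ∀ x, uᵣ x ≤ 0 := fun x =>
    (huᵣ x).trans_le (sSup_image_nonpos hw_nonpos _)
  have hu_zero : ∀ x ∈ Icc (-r) r, uᵣ x = 0 := fun x hx =>
    (huᵣ x).trans <| sSup_image_eq_zero_of_nonpos (y₀ := 0) hw_nonpos
      (by simpa only [mem_ofPred_eq, sub_zero] using abs_le.2 hx) (by simp [hw])
  intro x
  simpa only [hχ] using indicator_pos_le_mul_indicator_le_indicator_nonneg hu_nonpos hu_zero hγ x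

theorem occupation_function_sandwich
    (w : ℝ → ℝ) (hw : ∀ y, w y = -|y|) (r : ℝ) (hr : 0 ≤ r)
    (uᵣ : ℝ → ℝ) (huᵣ : ∀ x, uᵣ x = sSup (w '' {y | |x - y| ≤ r}))
    (γ : ℝ) (hγ : γ ∈ Icc (0:ℝ) 1)
    (χ : ℝ → ℝ) (hχ : ∀ x, χ x = γ * (Icc (-r) r).indicator (fun _ => (1:ℝ)) x) :
    ∀ x : ℝ,
      ({x : ℝ | uᵣ x > 0}).indicator (fun _ => (1:ℝ)) x ≤ χ x ∧
      χ x ≤ ({x : ℝ | uᵣ x ≥ 0}).indicator (fun _ => (1:ℝ)) x :=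
  occupation_function_sandwich_general w hw r uᵣ huᵣ γ hγ χ hχ
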